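/- arXiv:2012.11875 — 3 statements merged into one kernel-verified Lean document; each statement's English description precedes it below -/
import Mathlib

section
/- With the notation of the previous statement (k ≠ 0, 0 < ν ≤ 1, ξ₀ > 0 solving ν·ξ₀·(k² + ξ₀²) = 96|k|, and φ_k defined piecewise), there is an absolute constant C > 0 such that 0 < φ_k(ξ) ≤ C·ν⁻⁴ for all ξ ∈ ℝ. -/
/-- The piecewise multiplier `φ_k` built from the root `ξ₀`. -/
noncomputable def phiAux (k : ℤ) (ξ₀ : ℝ) (ξ : ℝ) : ℝ :=
  if 0 < ξ then 6 * ((k : ℝ) ^ 2 + ξ₀ ^ 2) ^ 2 / (k : ℝ) ^ 4 - (2 + Real.pi)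
  else if -ξ₀ ≤ ξ then 6 * ((k : ℝ) ^ 2 + ξ₀ ^ 2) ^ 2 / ((k : ℝ) ^ 2 + ξ ^ 2) ^ 2 - (2 + Real.pi)
  else (4 - Real.pi) * Real.exp (24 * ξ₀ * (ξ + ξ₀) / ((4 - Real.pi) * ((k : ℝ) ^ 2 + ξ₀ ^ 2)))

theorem phiAux_bounds :
    ∃ C : ℝ, 0 < C ∧ ∀ (k : ℤ), k ≠ 0 → ∀ (ν ξ₀ : ℝ), 0 < ν → ν ≤ 1 → 0 < ξ₀ →
      ν * ξ₀ * ((k : ℝ) ^ 2 + ξ₀ ^ 2) = 96 * |(k : ℝ)| →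
      ∀ ξ : ℝ, 0 < phiAux k ξ₀ ξ ∧ phiAux k ξ₀ ξ ≤ C * ν ^ (-4 : ℤ) := by
  refine ⟨56454, by norm_num, ?_⟩
  intro k hk ν ξ₀ hν hν1 hξ₀ heq ξ
  have hpi : Real.pi < 3.15 := Real.pi_lt_d2
  have hpi3 : 3 < Real.pi := Real.pi_gt_three
  have hk0 : ((k : ℝ)) ≠ 0 := by exact_mod_cast hk
  have hk1 : (1 : ℝ) ≤ |(k : ℝ)| := by
    rw [← Int.cast_abs]
    exact_mod_cast Int.one_le_abs (by omega)
  have hk2 : (1 : ℝ) ≤ (k : ℝ) ^ 2 := by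
    have := sq_abs (k : ℝ)
    nlinarith
  have hS : (0 : ℝ) < (k : ℝ) ^ 2 + ξ₀ ^ 2 := by positivity
  -- key bound : ν * (k²+ξ₀²) ≤ 97 * k²
  have hkey : ν * ((k : ℝ) ^ 2 + ξ₀ ^ 2) ≤ 97 * (k : ℝ) ^ 2 := by
    have habs : |(k : ℝ)| ≤ (k : ℝ) ^ 2 := by
      have := sq_abs (k : ℝ); nlinarith
    have hcube : ν * ξ₀ ^ 3 ≤ 96 * (k : ℝ) ^ 2 := by nlinarith
    rcases le_or_gt ξ₀ 1 with h | h
    · nlinarith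
    · nlinarith [sq_nonneg ξ₀]
  have hν4 : (0 : ℝ) < ν ^ 4 := by positivity
  have hnupow : ν ^ (-4 : ℤ) = (ν ^ 4)⁻¹ := by
    rw [zpow_neg]; norm_cast
  have hupper : 6 * ((k : ℝ) ^ 2 + ξ₀ ^ 2) ^ 2 / (k : ℝ) ^ 4 ≤ 56454 * ν ^ (-4 : ℤ) := by
    rw [hnupow, div_le_iff₀ (by positivity : (0:ℝ) < (k:ℝ)^4)]
    rw [show (56454 : ℝ) * (ν ^ 4)⁻¹ * (k:ℝ)^4 = 56454 * (k:ℝ)^4 / ν^4 by ring,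
      le_div_iff₀ hν4]
    nlinarith [mul_le_mul hkey hkey (by positivity) (by positivity),
      sq_nonneg (ν * ((k : ℝ) ^ 2 + ξ₀ ^ 2)), mul_pos hν hν,
      mul_le_one₀ hν1 hν.le hν1]
  have hCν : (1 : ℝ) ≤ 56454 * ν ^ (-4 : ℤ) := by
    rw [hnupow]
    have h1 : ν ^ 4 ≤ 56454 := le_trans (pow_le_one₀ hν.le hν1) (by norm_num)
    calc (1 : ℝ) ≤ ν ^ 4 * (ν ^ 4)⁻¹ := by rw [mul_inv_cancel₀ hν4.ne']
    _ ≤ 56454 * (ν ^ 4)⁻¹ := by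
        apply mul_le_mul_of_nonneg_right h1 (by positivity)
  unfold phiAux
  split_ifs with h1 h2
  · have hge : (k : ℝ) ^ 4 ≤ ((k : ℝ) ^ 2 + ξ₀ ^ 2) ^ 2 := by
      calc (k : ℝ) ^ 4 = ((k : ℝ) ^ 2) ^ 2 := by ring
      _ ≤ _ := pow_le_pow_left₀ (by positivity) (by nlinarith [sq_nonneg ξ₀]) 2
    have h6 : (6 : ℝ) ≤ 6 * ((k : ℝ) ^ 2 + ξ₀ ^ 2) ^ 2 / (k : ℝ) ^ 4 := by
      rw [le_div_iff₀ (by positivity : (0:ℝ) < (k:ℝ)^4)]; linarith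
    exact ⟨by linarith, by linarith⟩
  · -- middle branch : -ξ₀ ≤ ξ ≤ 0
    push_neg at h1
    have hξsq : ξ ^ 2 ≤ ξ₀ ^ 2 := by nlinarith
    have hden : (0 : ℝ) < (k : ℝ) ^ 2 + ξ ^ 2 := by positivity
    have hden2 : (0 : ℝ) < ((k : ℝ) ^ 2 + ξ ^ 2) ^ 2 := by positivity
    have hle : ((k : ℝ) ^ 2 + ξ ^ 2) ^ 2 ≤ ((k : ℝ) ^ 2 + ξ₀ ^ 2) ^ 2 :=
      pow_le_pow_left₀ hden.le (by linarith) 2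
    have h6 : (6 : ℝ) ≤ 6 * ((k : ℝ) ^ 2 + ξ₀ ^ 2) ^ 2 / ((k : ℝ) ^ 2 + ξ ^ 2) ^ 2 := by
      rw [le_div_iff₀ hden2]; linarith
    have hstep : 6 * ((k : ℝ) ^ 2 + ξ₀ ^ 2) ^ 2 / ((k : ℝ) ^ 2 + ξ ^ 2) ^ 2 ≤
        6 * ((k : ℝ) ^ 2 + ξ₀ ^ 2) ^ 2 / (k : ℝ) ^ 4 := by
      apply div_le_div_of_nonneg_left (by positivity) (by positivity)
      calc (k : ℝ) ^ 4 = ((k : ℝ) ^ 2) ^ 2 := by ring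
      _ ≤ _ := pow_le_pow_left₀ (by positivity) (by nlinarith [sq_nonneg ξ]) 2
    exact ⟨by linarith, by linarith⟩
  · -- exponential branch
    push_neg at h1 h2
    have h4pi : (0 : ℝ) < 4 - Real.pi := by linarith
    have hexp : 0 < Real.exp (24 * ξ₀ * (ξ + ξ₀) / ((4 - Real.pi) * ((k : ℝ) ^ 2 + ξ₀ ^ 2))) :=
      Real.exp_pos _
    have harg : 24 * ξ₀ * (ξ + ξ₀) / ((4 - Real.pi) * ((k : ℝ) ^ 2 + ξ₀ ^ 2)) ≤ 0 := by
      apply div_nonpos_of_nonpos_of_nonneg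
      · nlinarith
      · positivity
    have hexp1 : Real.exp (24 * ξ₀ * (ξ + ξ₀) / ((4 - Real.pi) * ((k : ℝ) ^ 2 + ξ₀ ^ 2))) ≤ 1 :=
      Real.exp_le_one_iff.mpr harg
    refine ⟨by positivity, ?_⟩
    have : (4 - Real.pi) * Real.exp (24 * ξ₀ * (ξ + ξ₀) /
        ((4 - Real.pi) * ((k : ℝ) ^ 2 + ξ₀ ^ 2))) ≤ (4 - Real.pi) * 1 :=
      mul_le_mul_of_nonneg_left hexp1 h4pi.le
    linarith
end

section
/- With the same notation, φ_k is non-decreasing on ℝ and there is an absolute constant C > 0 with 0 ≤ φ_k′(ξ) ≤ C·ν⁻³/|k| for all ξ ∈ ℝ. -/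
open Real Set Filter

/-- The explicit derivative of `phiAux`. -/
noncomputable def psiAux (k : ℤ) (ξ₀ : ℝ) (ξ : ℝ) : ℝ :=
  if 0 ≤ ξ then 0
  else if -ξ₀ ≤ ξ then -24 * ξ * ((k : ℝ) ^ 2 + ξ₀ ^ 2) ^ 2 / ((k : ℝ) ^ 2 + ξ ^ 2) ^ 3
  else 24 * ξ₀ / ((k : ℝ) ^ 2 + ξ₀ ^ 2) *
    Real.exp (24 * ξ₀ * (ξ + ξ₀) / ((4 - Real.pi) * ((k : ℝ) ^ 2 + ξ₀ ^ 2)))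

lemma hasDerivAt_midAux (k : ℤ) (hk : (k : ℝ) ≠ 0) (ξ₀ x : ℝ) :
    HasDerivAt (fun ξ => 6 * ((k : ℝ) ^ 2 + ξ₀ ^ 2) ^ 2 / ((k : ℝ) ^ 2 + ξ ^ 2) ^ 2 - (2 + Real.pi))
      (-24 * x * ((k : ℝ) ^ 2 + ξ₀ ^ 2) ^ 2 / ((k : ℝ) ^ 2 + x ^ 2) ^ 3) x := by
  have hKx : (0 : ℝ) < (k : ℝ) ^ 2 + x ^ 2 := by positivity
  have hu : HasDerivAt (fun ξ : ℝ => (k : ℝ) ^ 2 + ξ ^ 2) (2 * x) x := by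
    simpa using (hasDerivAt_pow 2 x).const_add ((k : ℝ) ^ 2)
  have h1 : HasDerivAt (fun ξ : ℝ => ((k : ℝ) ^ 2 + ξ ^ 2) ^ 2)
      (2 * ((k : ℝ) ^ 2 + x ^ 2) ^ 1 * (2 * x)) x := hu.pow 2
  have h2 := ((hasDerivAt_const x (6 * ((k : ℝ) ^ 2 + ξ₀ ^ 2) ^ 2)).div h1
    (by positivity)).sub_const (2 + Real.pi)
  refine h2.congr_deriv ?_
  field_simp
  ring

lemma hasDerivAt_expAux (k : ℤ) (hk : (k : ℝ) ≠ 0) (ξ₀ : ℝ) (x : ℝ) :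
    HasDerivAt (fun ξ => (4 - Real.pi) *
        Real.exp (24 * ξ₀ * (ξ + ξ₀) / ((4 - Real.pi) * ((k : ℝ) ^ 2 + ξ₀ ^ 2))))
      (24 * ξ₀ / ((k : ℝ) ^ 2 + ξ₀ ^ 2) *
        Real.exp (24 * ξ₀ * (x + ξ₀) / ((4 - Real.pi) * ((k : ℝ) ^ 2 + ξ₀ ^ 2)))) x := by
  have hπ : (0 : ℝ) < 4 - Real.pi := by linarith [Real.pi_lt_four]
  have hA : (0 : ℝ) < (k : ℝ) ^ 2 + ξ₀ ^ 2 := by positivity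
  have h1 : HasDerivAt (fun ξ : ℝ => 24 * ξ₀ * (ξ + ξ₀) / ((4 - Real.pi) * ((k : ℝ) ^ 2 + ξ₀ ^ 2)))
      (24 * ξ₀ / ((4 - Real.pi) * ((k : ℝ) ^ 2 + ξ₀ ^ 2))) x := by
    simpa using (((hasDerivAt_id x).add_const ξ₀).const_mul
      (24 * ξ₀)).div_const ((4 - Real.pi) * ((k : ℝ) ^ 2 + ξ₀ ^ 2))
  have h3 := (h1.exp).const_mul (4 - Real.pi)
  refine h3.congr_deriv ?_
  field_simp

lemma hasDerivAt_phiAux (k : ℤ) (hk : k ≠ 0) (ξ₀ : ℝ) (h0 : 0 < ξ₀) (ξ : ℝ) :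
    HasDerivAt (phiAux k ξ₀) (psiAux k ξ₀ ξ) ξ := by
  have hk' : (k : ℝ) ≠ 0 := by exact_mod_cast hk
  have hA : (0 : ℝ) < (k : ℝ) ^ 2 + ξ₀ ^ 2 := by positivity
  have hπ : (0 : ℝ) < 4 - Real.pi := by linarith [Real.pi_lt_four]
  rcases lt_trichotomy ξ 0 with hneg | rfl | hpos
  · rcases lt_trichotomy ξ (-ξ₀) with hl | rfl | hm
    · -- ξ < -ξ₀ : exponential region
      have hψ : psiAux k ξ₀ ξ = 24 * ξ₀ / ((k : ℝ) ^ 2 + ξ₀ ^ 2) *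
          Real.exp (24 * ξ₀ * (ξ + ξ₀) / ((4 - Real.pi) * ((k : ℝ) ^ 2 + ξ₀ ^ 2))) := by
        rw [psiAux, if_neg (not_le.mpr hneg), if_neg (not_le.mpr hl)]
      rw [hψ]
      refine (hasDerivAt_expAux k hk' ξ₀ ξ).congr_of_eventuallyEq ?_
      filter_upwards [Iio_mem_nhds hl] with x hx
      rw [phiAux, if_neg (by simp only [not_lt]; nlinarith [mem_Iio.mp hx]),
        if_neg (not_le.mpr (mem_Iio.mp hx))]
    · -- junction ξ = -ξ₀
      have hval : psiAux k ξ₀ (-ξ₀) = 24 * ξ₀ / ((k : ℝ) ^ 2 + ξ₀ ^ 2) := by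
        rw [psiAux, if_neg (not_le.mpr hneg), if_pos le_rfl, neg_sq]
        field_simp
      rw [hval]
      have heq : ∀ x ∈ Iic (-ξ₀), phiAux k ξ₀ x = (4 - Real.pi) *
          Real.exp (24 * ξ₀ * (x + ξ₀) / ((4 - Real.pi) * ((k : ℝ) ^ 2 + ξ₀ ^ 2))) := by
        intro x hx
        rcases eq_or_lt_of_le (mem_Iic.mp hx) with heq | hlt
        · subst heq
          rw [phiAux, if_neg (not_lt.mpr (by linarith)), if_pos le_rfl, neg_sq]
          rw [show 24 * ξ₀ * (-ξ₀ + ξ₀) / ((4 - Real.pi) * ((k : ℝ) ^ 2 + ξ₀ ^ 2)) = 0 by ring_nf,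
            Real.exp_zero]
          field_simp
          ring
        · rw [phiAux, if_neg (not_lt.mpr (by linarith)), if_neg (not_le.mpr hlt)]
      have hleft : HasDerivWithinAt (phiAux k ξ₀) (24 * ξ₀ / ((k : ℝ) ^ 2 + ξ₀ ^ 2))
          (Iic (-ξ₀)) (-ξ₀) := by
        have he : HasDerivAt (fun ξ => (4 - Real.pi) *
            Real.exp (24 * ξ₀ * (ξ + ξ₀) / ((4 - Real.pi) * ((k : ℝ) ^ 2 + ξ₀ ^ 2))))
            (24 * ξ₀ / ((k : ℝ) ^ 2 + ξ₀ ^ 2)) (-ξ₀) := by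
          have := hasDerivAt_expAux k hk' ξ₀ (-ξ₀)
          simpa using this
        exact he.hasDerivWithinAt.congr heq (heq _ (mem_Iic.mpr le_rfl))
      have hright : HasDerivWithinAt (phiAux k ξ₀) (24 * ξ₀ / ((k : ℝ) ^ 2 + ξ₀ ^ 2))
          (Ici (-ξ₀)) (-ξ₀) := by
        have hm : HasDerivAt (fun ξ => 6 * ((k : ℝ) ^ 2 + ξ₀ ^ 2) ^ 2 /
            ((k : ℝ) ^ 2 + ξ ^ 2) ^ 2 - (2 + Real.pi))
            (24 * ξ₀ / ((k : ℝ) ^ 2 + ξ₀ ^ 2)) (-ξ₀) := by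
          have := hasDerivAt_midAux k hk' ξ₀ (-ξ₀)
          convert this using 1
          rw [neg_sq]
          field_simp
        refine hm.hasDerivWithinAt.congr_of_eventuallyEq ?_ ?_
        · have h1 : Iio (0 : ℝ) ∈ nhdsWithin (-ξ₀) (Ici (-ξ₀)) :=
            nhdsWithin_le_nhds (Iio_mem_nhds (by linarith))
          filter_upwards [h1, self_mem_nhdsWithin] with x hx1 hx2
          rw [phiAux, if_neg (not_lt.mpr (le_of_lt (mem_Iio.mp hx1))), if_pos (mem_Ici.mp hx2)]
        · rw [phiAux, if_neg (not_lt.mpr (by linarith)), if_pos le_rfl]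
      have := hleft.union hright
      rw [Iic_union_Ici] at this
      exact hasDerivWithinAt_univ.mp this
    · -- -ξ₀ < ξ < 0 : middle region
      have hψ : psiAux k ξ₀ ξ = -24 * ξ * ((k : ℝ) ^ 2 + ξ₀ ^ 2) ^ 2 /
          ((k : ℝ) ^ 2 + ξ ^ 2) ^ 3 := by
        rw [psiAux, if_neg (not_le.mpr hneg), if_pos hm.le]
      rw [hψ]
      refine (hasDerivAt_midAux k hk' ξ₀ ξ).congr_of_eventuallyEq ?_
      filter_upwards [Ioo_mem_nhds hm hneg] with x hx
      rw [phiAux, if_neg (not_lt.mpr hx.2.le), if_pos hx.1.le]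
  · -- junction ξ = 0
    have hval : psiAux k ξ₀ 0 = 0 := by rw [psiAux, if_pos le_rfl]
    rw [hval]
    have hc : ∀ x ∈ Ici (0 : ℝ), phiAux k ξ₀ x =
        6 * ((k : ℝ) ^ 2 + ξ₀ ^ 2) ^ 2 / (k : ℝ) ^ 4 - (2 + Real.pi) := by
      intro x hx
      rcases eq_or_lt_of_le (mem_Ici.mp hx) with heq | hlt
      · rw [phiAux, if_neg (not_lt.mpr heq.ge), if_pos (by linarith [heq.le, h0] : -ξ₀ ≤ x), ← heq]
        norm_num
        ring_nf
      · rw [phiAux, if_pos hlt]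
    have hright : HasDerivWithinAt (phiAux k ξ₀) 0 (Ici (0 : ℝ)) 0 :=
      (hasDerivWithinAt_const 0 _ _).congr hc (hc 0 (mem_Ici.mpr le_rfl))
    have hleft : HasDerivWithinAt (phiAux k ξ₀) 0 (Iic (0 : ℝ)) 0 := by
      have hm : HasDerivAt (fun ξ => 6 * ((k : ℝ) ^ 2 + ξ₀ ^ 2) ^ 2 /
          ((k : ℝ) ^ 2 + ξ ^ 2) ^ 2 - (2 + Real.pi)) 0 0 := by
        have := hasDerivAt_midAux k hk' ξ₀ 0
        simpa using this
      refine hm.hasDerivWithinAt.congr_of_eventuallyEq ?_ ?_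
      · have h1 : Ioi (-ξ₀) ∈ nhdsWithin (0 : ℝ) (Iic 0) :=
          nhdsWithin_le_nhds (Ioi_mem_nhds (by linarith))
        filter_upwards [h1, self_mem_nhdsWithin] with x hx1 hx2
        rw [phiAux, if_neg (not_lt.mpr (mem_Iic.mp hx2)), if_pos (le_of_lt (mem_Ioi.mp hx1))]
      · rw [phiAux, if_neg (lt_irrefl 0), if_pos (by linarith)]
    have := hleft.union hright
    rw [Iic_union_Ici] at this
    exact hasDerivWithinAt_univ.mp this
  · -- 0 < ξ : constant region
    have hval : psiAux k ξ₀ ξ = 0 := by rw [psiAux, if_pos hpos.le]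
    rw [hval]
    refine (hasDerivAt_const ξ (6 * ((k : ℝ) ^ 2 + ξ₀ ^ 2) ^ 2 / (k : ℝ) ^ 4 -
      (2 + Real.pi))).congr_of_eventuallyEq ?_
    filter_upwards [Ioi_mem_nhds hpos] with x hx
    rw [phiAux, if_pos (mem_Ioi.mp hx)]

set_option maxHeartbeats 1000000

theorem phiAux_monotone_deriv_bounds :
    ∃ C : ℝ, 0 < C ∧ ∀ (k : ℤ), k ≠ 0 → ∀ (ν ξ₀ : ℝ), 0 < ν → ν ≤ 1 → 0 < ξ₀ →
      ν * ξ₀ * ((k : ℝ) ^ 2 + ξ₀ ^ 2) = 96 * |(k : ℝ)| →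
      Monotone (phiAux k ξ₀) ∧
      ∀ ξ : ℝ, 0 ≤ deriv (phiAux k ξ₀) ξ ∧
        deriv (phiAux k ξ₀) ξ ≤ C * ν ^ (-3 : ℤ) / |(k : ℝ)| := by
  refine ⟨223488, by norm_num, ?_⟩
  intro k hk ν ξ₀ hν hν1 hξ₀ hroot
  have hk' : (k : ℝ) ≠ 0 := by exact_mod_cast hk
  have hKpos : (0 : ℝ) < (k : ℝ) ^ 2 := by positivity
  have hA : (0 : ℝ) < (k : ℝ) ^ 2 + ξ₀ ^ 2 := by positivity
  have habs : (1 : ℝ) ≤ |(k : ℝ)| := by exact_mod_cast Int.one_le_abs hk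
  have hsqabs : |(k : ℝ)| ^ 2 = (k : ℝ) ^ 2 := sq_abs _
  have hK1 : (1 : ℝ) ≤ (k : ℝ) ^ 2 := by nlinarith
  have hd : ∀ ξ, deriv (phiAux k ξ₀) ξ = psiAux k ξ₀ ξ :=
    fun ξ => (hasDerivAt_phiAux k hk ξ₀ hξ₀ ξ).deriv
  have hnonneg : ∀ ξ, 0 ≤ psiAux k ξ₀ ξ := by
    intro ξ
    rw [psiAux]
    split_ifs with h1 h2
    · exact le_rfl
    · apply div_nonneg _ (by positivity)
      push_neg at h1
      nlinarith [sq_nonneg ((k : ℝ) ^ 2 + ξ₀ ^ 2)]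
    · positivity
  have hRHS : (223488 : ℝ) * ν ^ (-3 : ℤ) / |(k : ℝ)| = 223488 / (ν ^ 3 * |(k : ℝ)|) := by
    rw [zpow_neg, zpow_ofNat]
    ring
  refine ⟨?_, ?_⟩
  · exact monotone_of_deriv_nonneg
      (fun ξ => (hasDerivAt_phiAux k hk ξ₀ hξ₀ ξ).differentiableAt)
      (fun ξ => by rw [hd]; exact hnonneg ξ)
  · intro ξ
    refine ⟨by rw [hd]; exact hnonneg ξ, ?_⟩
    rw [hd, hRHS]
    have hνA : ν * ((k : ℝ) ^ 2 + ξ₀ ^ 2) ≤ 97 * (k : ℝ) ^ 2 := by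
      have hsq : ν * ξ₀ ^ 2 ≤ 96 * (k : ℝ) ^ 2 := by
        rcases le_total ξ₀ 1 with h | h
        · nlinarith
        · nlinarith [hroot, hsqabs, habs, mul_nonneg (mul_nonneg hν.le hξ₀.le) hKpos.le,
            mul_nonneg (mul_nonneg hν.le (sq_nonneg ξ₀)) (by linarith : (0:ℝ) ≤ ξ₀ - 1)]
      nlinarith
    rw [psiAux]
    split_ifs with h1 h2
    · positivity
    · -- middle region bound
      push_neg at h1
      have hden : (0 : ℝ) < ((k : ℝ) ^ 2 + ξ ^ 2) ^ 3 := by positivity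
      have step1 : -24 * ξ * ((k : ℝ) ^ 2 + ξ₀ ^ 2) ^ 2 / ((k : ℝ) ^ 2 + ξ ^ 2) ^ 3 ≤
          24 * ξ₀ * ((k : ℝ) ^ 2 + ξ₀ ^ 2) ^ 2 / ((k : ℝ) ^ 2) ^ 3 := by
        apply div_le_div₀ (by positivity)
        · nlinarith [sq_nonneg ((k : ℝ) ^ 2 + ξ₀ ^ 2)]
        · positivity
        · exact pow_le_pow_left₀ hKpos.le (by nlinarith) 3
      refine step1.trans ?_
      rw [div_le_div_iff₀ (by positivity) (by positivity)]
      have h2' : |(k : ℝ)| * |(k : ℝ)| = (k : ℝ) ^ 2 := by rw [← sq]; exact hsqabs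
      have key : 24 * ξ₀ * ((k : ℝ) ^ 2 + ξ₀ ^ 2) ^ 2 * (ν ^ 3 * |(k : ℝ)|) =
          2304 * ((k : ℝ) ^ 2 + ξ₀ ^ 2) * ν ^ 2 * (k : ℝ) ^ 2 := by
        linear_combination (24 * ((k : ℝ) ^ 2 + ξ₀ ^ 2) * ν ^ 2 * |(k : ℝ)|) * hroot +
          (2304 * ν ^ 2 * ((k : ℝ) ^ 2 + ξ₀ ^ 2)) * h2'
      rw [key]
      have hstep : 2304 * ((k : ℝ) ^ 2 + ξ₀ ^ 2) * ν ^ 2 * (k : ℝ) ^ 2 ≤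
          223488 * ((k : ℝ) ^ 2) ^ 2 := by
        nlinarith [mul_le_mul_of_nonneg_right hνA (mul_nonneg hν.le hKpos.le), sq_nonneg ν]
      refine hstep.trans ?_
      nlinarith [sq_nonneg ((k : ℝ) ^ 2)]
    · -- exponential region bound
      push_neg at h2
      have hπ : (0 : ℝ) < 4 - Real.pi := by linarith [Real.pi_lt_four]
      have hexp : Real.exp (24 * ξ₀ * (ξ + ξ₀) / ((4 - Real.pi) * ((k : ℝ) ^ 2 + ξ₀ ^ 2))) ≤ 1 := by
        apply Real.exp_le_one_iff.mpr
        apply div_nonpos_of_nonpos_of_nonneg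
        · nlinarith
        · positivity
      have step1 : 24 * ξ₀ / ((k : ℝ) ^ 2 + ξ₀ ^ 2) *
          Real.exp (24 * ξ₀ * (ξ + ξ₀) / ((4 - Real.pi) * ((k : ℝ) ^ 2 + ξ₀ ^ 2))) ≤
          24 * ξ₀ / ((k : ℝ) ^ 2 + ξ₀ ^ 2) := by
        nlinarith [div_nonneg (by positivity : (0:ℝ) ≤ 24 * ξ₀) hA.le,
          Real.exp_pos (24 * ξ₀ * (ξ + ξ₀) / ((4 - Real.pi) * ((k : ℝ) ^ 2 + ξ₀ ^ 2)))]
      refine step1.trans ?_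
      have step2 : 24 * ξ₀ / ((k : ℝ) ^ 2 + ξ₀ ^ 2) ≤ 12 / |(k : ℝ)| := by
        rw [div_le_div_iff₀ hA (by linarith)]
        nlinarith [sq_nonneg (|(k : ℝ)| - ξ₀), hsqabs]
      refine step2.trans ?_
      have hν3 : ν ^ 3 ≤ 1 := pow_le_one₀ hν.le hν1
      have h5 := mul_le_mul_of_nonneg_right hν3 (abs_nonneg ((k : ℝ)))
      refine div_le_div₀ (by norm_num) (by norm_num) (by positivity) (by linarith)
end

section
/- Let k be a nonzero integer, ν > 0, and let φ_k and ξ₀ be as above. Then for all ξ with sgn(k)·ξ ≤ −ξ₀, one has (1/4)·ν·ξ² + (2 + π + φ_k(sgn(k)ξ))·(4kξ)/(k² + ξ²) ≥ 0. -/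
theorem phiAux_outer_region (k : ℤ) (hk : k ≠ 0) (ν ξ₀ : ℝ) (hν : 0 < ν) (hξ₀ : 0 < ξ₀)
    (heq : ν * ξ₀ * ((k : ℝ) ^ 2 + ξ₀ ^ 2) = 96 * |(k : ℝ)|) :
    ∀ ξ : ℝ, (Int.sign k : ℝ) * ξ ≤ -ξ₀ →
      (1 / 4) * ν * ξ ^ 2 +
        (2 + Real.pi + phiAux k ξ₀ ((Int.sign k : ℝ) * ξ)) *
          (4 * (k : ℝ) * ξ) / ((k : ℝ) ^ 2 + ξ ^ 2) ≥ 0 := by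
  intro ξ hξ
  have hk' : ((k : ℝ)) ≠ 0 := Int.cast_ne_zero.mpr hk
  have hkabs : 0 < |(k : ℝ)| := abs_pos.mpr hk'
  set s : ℝ := (Int.sign k : ℝ) with hs
  have hs2 : s = 1 ∨ s = -1 := by
    rcases lt_trichotomy k 0 with h | h | h
    · right; simp [hs, Int.sign_eq_neg_one_of_neg h]
    · exact absurd h hk
    · left; simp [hs, Int.sign_eq_one_of_pos h]
  have hsk : s * (k : ℝ) = |(k : ℝ)| := by
    rcases lt_trichotomy k 0 with h | h | h
    · have hkneg : (k : ℝ) < 0 := by exact_mod_cast h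
      rw [hs, Int.sign_eq_neg_one_of_neg h, abs_of_neg hkneg]; push_cast; ring
    · exact absurd h hk
    · have hkpos : (0:ℝ) < (k : ℝ) := by exact_mod_cast h
      rw [hs, Int.sign_eq_one_of_pos h, abs_of_pos hkpos]; push_cast; ring
  have hsξ0 : s * ξ < 0 := lt_of_le_of_lt hξ (by linarith)
  have hξabs : |ξ| = -(s * ξ) := by
    have h1 : |s * ξ| = |ξ| := by
      rcases hs2 with h | h <;> rw [h] <;> simp [abs_mul]
    rw [← h1, abs_of_neg hsξ0]
  have hξ0ab : ξ₀ ≤ |ξ| := by rw [hξabs]; linarith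
  have hξpos : 0 < |ξ| := lt_of_lt_of_le hξ₀ hξ0ab
  have hkξ : (k : ℝ) * ξ = -(|(k : ℝ)| * |ξ|) := by
    have hss : s * s = 1 := by rcases hs2 with h | h <;> rw [h] <;> ring
    have h1 : (k : ℝ) * ξ = (s * (k : ℝ)) * (s * ξ) := by
      rw [show (s * (k:ℝ)) * (s * ξ) = (s * s) * ((k:ℝ) * ξ) by ring, hss, one_mul]
    have h2 : s * ξ = -|ξ| := by linarith [hξabs]
    rw [h1, hsk, h2]; ring
  have key : ∀ A : ℝ, 0 < A → A ≤ 6 →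
      (1 / 4) * ν * ξ ^ 2 + A * (4 * (k : ℝ) * ξ) / ((k : ℝ) ^ 2 + ξ ^ 2) ≥ 0 := by
    intro A hA0 hA6
    have hD : 0 < (k : ℝ) ^ 2 + ξ ^ 2 := by positivity
    have h1 : A * (4 * (k : ℝ) * ξ) = -(A * (4 * |(k:ℝ)| * |ξ|)) := by
      linear_combination (4 * A) * hkξ
    rw [ge_iff_le, h1, neg_div, ← sub_eq_add_neg, sub_nonneg, div_le_iff₀ hD]
    have st1 : ξ₀ * ((k : ℝ) ^ 2 + ξ₀ ^ 2) ≤ |ξ| * ((k : ℝ) ^ 2 + ξ ^ 2) := by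
      apply mul_le_mul hξ0ab _ (by positivity) (abs_nonneg ξ)
      nlinarith [sq_abs ξ]
    have st2 : ν * (ξ₀ * ((k : ℝ) ^ 2 + ξ₀ ^ 2)) * |ξ| ≤ ν * (|ξ| * ((k : ℝ) ^ 2 + ξ ^ 2)) * |ξ| :=
      mul_le_mul_of_nonneg_right (mul_le_mul_of_nonneg_left st1 hν.le) (abs_nonneg ξ)
    have st3 : A * (4 * |(k:ℝ)| * |ξ|) ≤ 6 * (4 * |(k:ℝ)| * |ξ|) :=
      mul_le_mul_of_nonneg_right hA6 (by positivity)
    have heq2 : ν * (ξ₀ * ((k : ℝ) ^ 2 + ξ₀ ^ 2)) * |ξ| = 96 * |(k:ℝ)| * |ξ| := by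
      rw [show ν * (ξ₀ * ((k : ℝ) ^ 2 + ξ₀ ^ 2)) = ν * ξ₀ * ((k : ℝ) ^ 2 + ξ₀ ^ 2) from by ring,
        heq]
    have st4 : ν * (|ξ| * ((k : ℝ) ^ 2 + ξ ^ 2)) * |ξ| = ν * ξ ^ 2 * ((k : ℝ) ^ 2 + ξ ^ 2) := by
      rw [← sq_abs ξ]; ring
    linarith [heq2, st2, st3, st4]
  have h1 : ¬ (0 < s * ξ) := not_lt.mpr hsξ0.le
  rcases eq_or_lt_of_le hξ with heqb | hlt
  · have h2 : -ξ₀ ≤ s * ξ := le_of_eq heqb.symm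
    rw [phiAux, if_neg h1, if_pos h2]
    have h3 : (s * ξ) ^ 2 = ξ₀ ^ 2 := by rw [heqb]; ring
    rw [h3]
    have hval : 2 + Real.pi +
        (6 * ((k : ℝ) ^ 2 + ξ₀ ^ 2) ^ 2 / ((k : ℝ) ^ 2 + ξ₀ ^ 2) ^ 2 - (2 + Real.pi)) = 6 := by
      rw [mul_div_assoc, div_self (by positivity : (((k : ℝ) ^ 2 + ξ₀ ^ 2) ^ 2) ≠ 0)]; ring
    rw [hval]
    exact key 6 (by norm_num) le_rfl
  · rw [phiAux, if_neg h1, if_neg (not_le.mpr hlt)]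
    have hπ : Real.pi < 4 := by nlinarith [Real.pi_lt_d2]
    set t := 24 * ξ₀ * (s * ξ + ξ₀) / ((4 - Real.pi) * ((k : ℝ) ^ 2 + ξ₀ ^ 2)) with ht
    have htle : t ≤ 0 := by
      apply div_nonpos_of_nonpos_of_nonneg
      · nlinarith
      · have : (0:ℝ) < (k : ℝ) ^ 2 + ξ₀ ^ 2 := by positivity
        nlinarith
    have hexp : Real.exp t ≤ 1 := Real.exp_le_one_iff.mpr htle
    have hexp0 : 0 < Real.exp t := Real.exp_pos t
    have hm : 0 < (4 - Real.pi) * Real.exp t := mul_pos (by linarith) hexp0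
    have hm6 : (4 - Real.pi) * Real.exp t ≤ 4 - Real.pi := by
      nlinarith
    exact key _ (by linarith [Real.pi_pos]) (by linarith [Real.pi_pos])
end
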